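/- Let f be a normalized monotone non-decreasing submodular function on V and (V, I) a single matroid. The greedy algorithm achieves f(S) ≥ f(S*)/2 for the matroid-constrained maximization problem, where S* ∈ I maximizes f. -/

import Mathlib

/-!
For each element `u` of the optimum `O` missed by the greedy set `S_k`, let `c u` be the last
step at which `u` could still have been added. Augmentation shows that at most `t` elements of
`O` cannot be added to the `t`-element independent set `S_t`, which is exactly Hall's condition
for charging each such `u` injectively to a step `g u ≤ c u`. Greedy chose `v_{g u}` although `u`
was available, so by submodularity the marginal gain of `u` on `S_k` is at most the gain of step
`g u`. Summing, `f O ≤ f S_k + ∑ (marginal gains on S_k) ≤ f S_k + ∑ (step gains) = 2 f S_k`.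
-/

/-- The matroid axioms for a family of independent sets given as a predicate. -/
def IsMatroidInd {α : Type*} [DecidableEq α] (Ind : Finset α → Prop) : Prop :=
  Ind ∅ ∧
  (∀ A B : Finset α, A ⊆ B → Ind B → Ind A) ∧
  (∀ A B : Finset α, Ind A → Ind B → B.card < A.card →
    ∃ v ∈ A \ B, Ind (insert v B))

open Finset

theorem IsMatroidInd.card_filter_not_indep_insert_le {α : Type*} [DecidableEq α]
    {Ind : Finset α → Prop} [DecidablePred Ind] (hmat : IsMatroidInd Ind) {I A : Finset α}
    (hI : Ind I) (hA : Ind A) : #{u ∈ I | ¬ Ind (insert u A)} ≤ #A := by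
  by_contra! hlt
  obtain ⟨w, hw, hwA⟩ := hmat.2.2 _ A (hmat.2.1 _ I (filter_subset _ _) hI) hA hlt
  exact (mem_filter.1 (mem_sdiff.1 hw).1).2 hwA

/-- Hall's theorem for the intervals `[0, c u]`. -/
theorem exists_injective_le_of_card_filter_lt_le {ι : Type*} (T : Finset ι) (c : ι → ℕ)
    (h : ∀ t, #{u ∈ T | c u < t} ≤ t) :
    ∃ g : T → ℕ, Function.Injective g ∧ ∀ u, g u ≤ c u := by
  obtain ⟨g, hg_inj, hg⟩ := (all_card_le_biUnion_card_iff_exists_injective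
      fun u : T => range (c u + 1)).1 fun s => by
    rcases s.eq_empty_or_nonempty with rfl | hs
    · simp
    obtain ⟨u₀, hu₀, hmax⟩ := s.exists_max_image (fun u => c u) hs
    calc #s = #(s.map (Function.Embedding.subtype _)) := (card_map _).symm
      _ ≤ #{u ∈ T | c u < c u₀ + 1} := card_le_card fun u hu => by
          obtain ⟨u, hus, rfl⟩ := mem_map.1 hu
          exact mem_filter.2 ⟨u.2, Nat.lt_succ_of_le (hmax u hus)⟩
      _ ≤ c u₀ + 1 := h _
      _ = #(range (c u₀ + 1)) := (card_range _).symm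
      _ ≤ _ := card_le_card (subset_biUnion_of_mem (fun u : T => range (c u + 1)) hu₀)
  exact ⟨g, hg_inj, fun u => Nat.lt_succ_iff.1 (mem_range.1 (hg u))⟩

section Greedy

variable {V : Type*} [DecidableEq V] {f : Finset V → ℝ}

theorem union_le_add_sum_marginal
    (hsub : ∀ (A B : Finset V) (v : V), A ⊆ B → v ∉ B →
      f (insert v B) - f B ≤ f (insert v A) - f A) (A T : Finset V) :
    f (A ∪ T) ≤ f A + ∑ u ∈ T, (f (insert u A) - f A) := by
  induction T using Finset.induction_on with
  | empty => simp
  | @insert a T ha ih =>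
    rw [sum_insert ha, union_insert]
    by_cases haAT : a ∈ A ∪ T
    · have haA : a ∈ A := (mem_union.1 haAT).resolve_right ha
      rw [insert_eq_of_mem haAT, insert_eq_of_mem haA]
      linarith
    · linarith [hsub A (A ∪ T) a subset_union_left haAT]

structure IsGreedyRun (f : Finset V → ℝ) (Ind : Finset V → Prop) (k : ℕ) (S : ℕ → Finset V)
    (v : ℕ → V) : Prop where
  start : S 0 = ∅
  not_mem : ∀ i < k, v i ∉ S i
  indep : ∀ i < k, Ind (insert (v i) (S i))
  succ_eq : ∀ i < k, S (i + 1) = insert (v i) (S i)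
  best : ∀ i < k, ∀ u : V, u ∉ S i → Ind (insert u (S i)) →
    f (insert u (S i)) - f (S i) ≤ f (insert (v i) (S i)) - f (S i)
  maximal : ∀ u : V, u ∉ S k → ¬ Ind (insert u (S k))

namespace IsGreedyRun

variable {Ind : Finset V → Prop} {k : ℕ} {S : ℕ → Finset V} {v : ℕ → V}

theorem subset_of_le (hG : IsGreedyRun f Ind k S v) {i j : ℕ} (hij : i ≤ j) (hjk : j ≤ k) :
    S i ⊆ S j := by
  induction j, hij using Nat.le_induction with
  | base => exact subset_rfl
  | succ j _ ih =>
    rw [hG.succ_eq j hjk]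
    exact (ih (by omega)).trans (subset_insert _ _)

theorem card_eq (hG : IsGreedyRun f Ind k S v) {i : ℕ} (hik : i ≤ k) : #(S i) = i := by
  induction i with
  | zero => simp [hG.start]
  | succ i ih => rw [hG.succ_eq i hik, card_insert_of_notMem (hG.not_mem i hik), ih (by omega)]

theorem indep_of_le (hG : IsGreedyRun f Ind k S v) (hempty : Ind ∅) {i : ℕ} (hik : i ≤ k) :
    Ind (S i) := by
  cases i with
  | zero => rwa [hG.start]
  | succ i => rw [hG.succ_eq i hik]; exact hG.indep i hik

theorem marginal_le_gain (hG : IsGreedyRun f Ind k S v)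
    (hsub : ∀ (A B : Finset V) (v : V), A ⊆ B → v ∉ B →
      f (insert v B) - f B ≤ f (insert v A) - f A)
    {u : V} (hu : u ∉ S k) {i : ℕ} (hik : i < k) (hui : Ind (insert u (S i))) :
    f (insert u (S k)) - f (S k) ≤ f (S (i + 1)) - f (S i) := by
  have hSik := hG.subset_of_le hik.le le_rfl
  calc f (insert u (S k)) - f (S k) ≤ f (insert u (S i)) - f (S i) := hsub _ _ u hSik hu
    _ ≤ f (S (i + 1)) - f (S i) := by
      rw [hG.succ_eq i hik]
      exact hG.best i hik u (fun h => hu (hSik h)) hui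

theorem exists_injective_charging (hG : IsGreedyRun f Ind k S v) (hmat : IsMatroidInd Ind)
    {I : Finset V} (hI : Ind I) :
    ∃ g : ↥(I \ S k) → ℕ, Function.Injective g ∧
      ∀ u, g u < k ∧ Ind (insert u.1 (S (g u))) := by
  classical
  set c : V → ℕ := fun u => Nat.findGreatest (fun i => Ind (insert u (S i))) k
  have hc_indep : ∀ u ∈ I, Ind (insert u (S (c u))) := fun u hu =>
    Nat.findGreatest_spec (P := fun i => Ind (insert u (S i))) (Nat.zero_le k) <| by
      rw [hG.start, insert_empty]
      exact hmat.2.1 _ I (singleton_subset_iff.2 hu) hI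
  have hc_lt : ∀ u ∈ I \ S k, c u < k := fun u hu =>
    (Nat.findGreatest_le k).lt_of_ne fun hck =>
      hG.maximal u (mem_sdiff.1 hu).2 (hck ▸ hc_indep u (mem_sdiff.1 hu).1)
  have hHall : ∀ t, #{u ∈ I \ S k | c u < t} ≤ t := fun t => by
    have hS : Ind (S (min t k)) := hG.indep_of_le hmat.1 (min_le_right t k)
    calc #{u ∈ I \ S k | c u < t} ≤ #{u ∈ I | ¬ Ind (insert u (S (min t k)))} :=
          card_le_card fun u hu => by
            obtain ⟨hu, hut⟩ := mem_filter.1 hu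
            refine mem_filter.2 ⟨(mem_sdiff.1 hu).1, fun hind => ?_⟩
            have : min t k ≤ c u :=
              Nat.le_findGreatest (P := fun i => Ind (insert u (S i))) (min_le_right t k) hind
            have := hc_lt u hu
            omega
      _ ≤ #(S (min t k)) := hmat.card_filter_not_indep_insert_le hI hS
      _ ≤ t := (hG.card_eq (min_le_right t k)).trans_le (min_le_left t k)
  obtain ⟨g, hg_inj, hg_le⟩ := exists_injective_le_of_card_filter_lt_le _ c hHall
  refine ⟨g, hg_inj, fun u => ⟨(hg_le u).trans_lt (hc_lt u u.2), ?_⟩⟩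
  exact hmat.2.1 _ _ (insert_subset_insert _ (hG.subset_of_le (hg_le u) (hc_lt u u.2).le))
    (hc_indep u (mem_sdiff.1 u.2).1)

theorem sum_gain_comp_le (hG : IsGreedyRun f Ind k S v)
    (hmono : ∀ A B : Finset V, A ⊆ B → f A ≤ f B) {ι : Type*} (s : Finset ι) {g : ι → ℕ}
    (hg_inj : Set.InjOn g s) (hg_lt : ∀ u ∈ s, g u < k) :
    ∑ u ∈ s, (f (S (g u + 1)) - f (S (g u))) ≤ f (S k) - f (S 0) := by
  classical
  rw [← sum_image (f := fun i => f (S (i + 1)) - f (S i)) hg_inj,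
    ← sum_range_sub (fun i => f (S i))]
  exact sum_le_sum_of_subset_of_nonneg (image_subset_iff.2 fun u hu => mem_range.2 (hg_lt u hu))
    fun i hi _ => sub_nonneg.2 (hmono _ _ (hG.subset_of_le (Nat.le_succ i) (mem_range.1 hi)))

end IsGreedyRun

end Greedy

theorem greedy_single_matroid_half_bound_general {V : Type*} [DecidableEq V]
    (f : Finset V → ℝ)
    (hnorm : f ∅ = 0)
    (hmono : ∀ A B : Finset V, A ⊆ B → f A ≤ f B)
    (hsub : ∀ (A B : Finset V) (v : V), A ⊆ B → v ∉ B →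
      f (insert v B) - f B ≤ f (insert v A) - f A)
    (Ind : Finset V → Prop)
    (hmat : IsMatroidInd Ind)
    (k : ℕ) (S : ℕ → Finset V) (v : ℕ → V)
    (hS0 : S 0 = ∅)
    (hstep : ∀ i < k,
      v i ∉ S i ∧
      Ind (insert (v i) (S i)) ∧
      S (i + 1) = insert (v i) (S i) ∧
      (∀ u : V, u ∉ S i → Ind (insert u (S i)) →
        f (insert u (S i)) - f (S i) ≤ f (insert (v i) (S i)) - f (S i)))
    (hstop : ∀ u : V, u ∉ S k → ¬ Ind (insert u (S k)))
    (Sstar : Finset V)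
    (hfeas : Ind Sstar) :
    f Sstar / 2 ≤ f (S k) := by
  have hG : IsGreedyRun f Ind k S v := ⟨hS0, fun i hi => (hstep i hi).1,
    fun i hi => (hstep i hi).2.1, fun i hi => (hstep i hi).2.2.1,
    fun i hi => (hstep i hi).2.2.2, hstop⟩
  obtain ⟨g, hg_inj, hg⟩ := hG.exists_injective_charging hmat hfeas
  have := calc
    f Sstar ≤ f (S k ∪ (Sstar \ S k)) := hmono _ _ (by rw [union_sdiff_self_eq_union]; simp)
    _ ≤ f (S k) + ∑ u ∈ (Sstar \ S k).attach, (f (insert u.1 (S k)) - f (S k)) := by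
      rw [sum_attach (Sstar \ S k) fun u => f (insert u (S k)) - f (S k)]
      exact union_le_add_sum_marginal hsub _ _
    _ ≤ f (S k) + ∑ u ∈ (Sstar \ S k).attach, (f (S (g u + 1)) - f (S (g u))) := by
      refine add_le_add_right (sum_le_sum fun u _ => ?_) _
      exact hG.marginal_le_gain hsub (mem_sdiff.1 u.2).2 (hg u).1 (hg u).2
    _ ≤ f (S k) + (f (S k) - f (S 0)) := by
      gcongr
      exact hG.sum_gain_comp_le hmono _ hg_inj.injOn fun u _ => (hg u).1
  rw [hS0, hnorm] at this
  linarith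

theorem greedy_single_matroid_half_bound {V : Type*} [Fintype V] [DecidableEq V]
    (f : Finset V → ℝ)
    (hnorm : f ∅ = 0)
    (hmono : ∀ A B : Finset V, A ⊆ B → f A ≤ f B)
    (hsub : ∀ (A B : Finset V) (v : V), A ⊆ B → v ∉ B →
      f (insert v B) - f B ≤ f (insert v A) - f A)
    (Ind : Finset V → Prop)
    (hmat : IsMatroidInd Ind)
    (k : ℕ) (S : ℕ → Finset V) (v : ℕ → V)
    (hS0 : S 0 = ∅)
    (hstep : ∀ i < k,
      v i ∉ S i ∧
      Ind (insert (v i) (S i)) ∧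
      S (i + 1) = insert (v i) (S i) ∧
      (∀ u : V, u ∉ S i → Ind (insert u (S i)) →
        f (insert u (S i)) - f (S i) ≤ f (insert (v i) (S i)) - f (S i)))
    (hstop : ∀ u : V, u ∉ S k → ¬ Ind (insert u (S k)))
    (Sstar : Finset V)
    (hfeas : Ind Sstar)
    (hopt : ∀ A : Finset V, Ind A → f A ≤ f Sstar) :
    f Sstar / 2 ≤ f (S k) :=
  greedy_single_matroid_half_bound_general f hnorm hmono hsub Ind hmat k S v hS0 hstep hstop Sstar
    hfeas
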